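/- Let z ∈ ℝⁿ with n ≥ 2 and let i* be an index achieving the strict unique maximum of z (z_{i*} > z_j for all j ≠ i*). Define p_{i*}(T) = exp(z_{i*}/T)/Σ_j exp(z_j/T). Then for 1 ≤ T₁ < T₂, p_{i*}(T₂) < p_{i*}(T₁). -/
import Mathlib

lemma softmax_rewrite (n : ℕ) (z : Fin n → ℝ) (istar : Fin n) (T : ℝ) :
    Real.exp (z istar / T) / ∑ j, Real.exp (z j / T)
      = (∑ j, Real.exp ((z j - z istar) / T))⁻¹ := by
  have h : ∑ j, Real.exp ((z j - z istar) / T)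
      = (∑ j, Real.exp (z j / T)) / Real.exp (z istar / T) := by
    rw [Finset.sum_div]
    refine Finset.sum_congr rfl fun j _ => ?_
    rw [← Real.exp_sub, sub_div]
  rw [h, inv_div]

theorem softmax_max_prob_decreasing_in_temperature
    (n : ℕ) (hn : 2 ≤ n) (z : Fin n → ℝ) (istar : Fin n)
    (hmax : ∀ j : Fin n, j ≠ istar → z j < z istar)
    (T₁ T₂ : ℝ) (hT₁ : 1 ≤ T₁) (hT : T₁ < T₂) :
    Real.exp (z istar / T₂) / ∑ j, Real.exp (z j / T₂)
      < Real.exp (z istar / T₁) / ∑ j, Real.exp (z j / T₁) := by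
  have hT₁pos : (0:ℝ) < T₁ := lt_of_lt_of_le one_pos hT₁
  have hT₂pos : (0:ℝ) < T₂ := hT₁pos.trans hT
  rw [softmax_rewrite, softmax_rewrite]
  have hS₁pos : 0 < ∑ j, Real.exp ((z j - z istar) / T₁) :=
    Finset.sum_pos (fun j _ => Real.exp_pos _) ⟨istar, Finset.mem_univ _⟩
  refine inv_strictAnti₀ hS₁pos ?_
  -- there exists j ≠ istar
  obtain ⟨j₀, hj₀⟩ : ∃ j : Fin n, j ≠ istar := by
    have h1 : 1 < Fintype.card (Fin n) := by simpa using lt_of_lt_of_le one_lt_two hn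
    exact Fintype.exists_ne_of_one_lt_card h1 istar
  refine Finset.sum_lt_sum (fun j _ => ?_) ⟨j₀, Finset.mem_univ _, ?_⟩
  · rcases eq_or_ne j istar with rfl | hne
    · simp
    · have hz : z j - z istar < 0 := sub_neg.mpr (hmax j hne)
      have hinv : T₂⁻¹ ≤ T₁⁻¹ := inv_anti₀ hT₁pos hT.le
      refine Real.exp_le_exp.mpr ?_
      rw [div_eq_mul_inv, div_eq_mul_inv]
      exact mul_le_mul_of_nonpos_left hinv hz.le
  · have hz : z j₀ - z istar < 0 := sub_neg.mpr (hmax j₀ hj₀)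
    have hinv : T₂⁻¹ < T₁⁻¹ := by
      exact inv_strictAnti₀ hT₁pos hT
    refine Real.exp_lt_exp.mpr ?_
    rw [div_eq_mul_inv, div_eq_mul_inv]
    exact mul_lt_mul_of_neg_left hinv hz
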